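/- Every RNFAwtl A can be effectively converted into an equivalent RNFAwtl C such that C never enters an infinite computation and C accepts only after reading and deleting its input completely; if A is deterministic, then C is deterministic. -/

import Mathlib

/-- A nondeterministic finite automaton with translucent letters (NFAwtl). -/
structure NFAwtl (Q α : Type) where
  τ : Q → Set α
  I : Set Q
  F : Set Q
  δ : Q → α → Set Q
  tr : ∀ q a, a ∈ τ q → δ q a = ∅

namespace NFAwtl

variable {Q α : Type}

/-- One computation step of an NFAwtl: delete the leftmost non-translucent letter
and change state (the head returns to the left end). -/
def Step (A : NFAwtl Q α) : Q × List α → Q × List α → Prop := fun c c' =>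
  ∃ u a v, c.2 = u ++ a :: v ∧ (∀ x ∈ u, x ∈ A.τ c.1) ∧ a ∉ A.τ c.1 ∧
    c'.1 ∈ A.δ c.1 a ∧ c'.2 = u ++ v

/-- Acceptance: from some initial state, reach a configuration whose remaining
letters are all translucent for a final state. -/
def Accepts (A : NFAwtl Q α) (w : List α) : Prop :=
  ∃ q₀ ∈ A.I, ∃ q w', Relation.ReflTransGen A.Step (q₀, w) (q, w') ∧
    (∀ x ∈ w', x ∈ A.τ q) ∧ q ∈ A.F

def lang (A : NFAwtl Q α) : Set (List α) := { w | A.Accepts w }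

/-- A DFAwtl: single initial state and at most one transition per state/letter. -/
def Deterministic (A : NFAwtl Q α) : Prop :=
  (∃ q₀, A.I = {q₀}) ∧ ∀ q a, (A.δ q a).Subsingleton

end NFAwtl

/-- A repetitive NFAwtl (RNFAwtl): on the end-of-tape marker it may accept
(states in `Facc`) or change state via `δend` and continue. -/
structure RNFAwtl (Q α : Type) where
  τ : Q → Set α
  I : Set Q
  δ : Q → α → Set Q
  δend : Q → Set Q
  Facc : Set Q
  tr : ∀ q a, a ∈ τ q → δ q a = ∅
  accEnd : ∀ q, q ∈ Facc → δend q = ∅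

namespace RNFAwtl

variable {Q α : Type}

/-- One computation step of an RNFAwtl: either delete the leftmost
non-translucent letter, or, when all remaining letters are translucent,
change state via a `◁`-transition and continue. -/
def Step (A : RNFAwtl Q α) : Q × List α → Q × List α → Prop := fun c c' =>
  (∃ u a v, c.2 = u ++ a :: v ∧ (∀ x ∈ u, x ∈ A.τ c.1) ∧ a ∉ A.τ c.1 ∧
    c'.1 ∈ A.δ c.1 a ∧ c'.2 = u ++ v)
  ∨ ((∀ x ∈ c.2, x ∈ A.τ c.1) ∧ c'.1 ∈ A.δend c.1 ∧ c'.2 = c.2)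

def Accepts (A : RNFAwtl Q α) (w : List α) : Prop :=
  ∃ q₀ ∈ A.I, ∃ q w', Relation.ReflTransGen A.Step (q₀, w) (q, w') ∧
    (∀ x ∈ w', x ∈ A.τ q) ∧ q ∈ A.Facc

def lang (A : RNFAwtl Q α) : Set (List α) := { w | A.Accepts w }

/-- An RDFAwtl: single initial state and deterministic transitions. -/
def Deterministic (A : RNFAwtl Q α) : Prop :=
  (∃ q₀, A.I = {q₀}) ∧ (∀ q a, (A.δ q a).Subsingleton) ∧ ∀ q, (A.δend q).Subsingleton

end RNFAwtl

/-- A non-returning repetitive NFAwtl (nr-NFAwtl): the head continues from the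
position of the last deleted letter; on the end-of-tape marker it may change
state and return the head to the left end. -/
structure NrNFAwtl (Q α : Type) where
  τ : Q → Set α
  I : Set Q
  δ : Q → α → Set Q
  δend : Q → Set Q
  Facc : Set Q
  tr : ∀ q a, a ∈ τ q → δ q a = ∅
  accEnd : ∀ q, q ∈ Facc → δend q = ∅

namespace NrNFAwtl

variable {Q α : Type}

/-- Configurations are `(x, q, w)`: `x` is the already-skipped prefix, the head
is on the first letter of `w`. -/
def Step (A : NrNFAwtl Q α) :
    List α × Q × List α → List α × Q × List α → Prop := fun c c' =>
  (∃ u a v, c.2.2 = u ++ a :: v ∧ (∀ x ∈ u, x ∈ A.τ c.2.1) ∧ a ∉ A.τ c.2.1 ∧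
    c'.2.1 ∈ A.δ c.2.1 a ∧ c'.1 = c.1 ++ u ∧ c'.2.2 = v)
  ∨ ((∀ x ∈ c.2.2, x ∈ A.τ c.2.1) ∧ c'.2.1 ∈ A.δend c.2.1 ∧ c'.1 = [] ∧
    c'.2.2 = c.1 ++ c.2.2)

def Accepts (A : NrNFAwtl Q α) (w : List α) : Prop :=
  ∃ q₀ ∈ A.I, ∃ x q w', Relation.ReflTransGen A.Step ([], q₀, w) (x, q, w') ∧
    (∀ y ∈ w', y ∈ A.τ q) ∧ q ∈ A.Facc

def lang (A : NrNFAwtl Q α) : Set (List α) := { w | A.Accepts w }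

def Deterministic (A : NrNFAwtl Q α) : Prop :=
  (∃ q₀, A.I = {q₀}) ∧ (∀ q a, (A.δ q a).Subsingleton) ∧ ∀ q, (A.δend q).Subsingleton

end NrNFAwtl

/-- A non-repetitive non-returning NFAwtl (nr-nr-NFAwtl): non-returning, and it
must halt as soon as all remaining letters to the right are translucent. -/
structure NrnrNFAwtl (Q α : Type) where
  τ : Q → Set α
  I : Set Q
  F : Set Q
  δ : Q → α → Set Q
  tr : ∀ q a, a ∈ τ q → δ q a = ∅

namespace NrnrNFAwtl

variable {Q α : Type}

def Step (A : NrnrNFAwtl Q α) :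
    List α × Q × List α → List α × Q × List α → Prop := fun c c' =>
  ∃ u a v, c.2.2 = u ++ a :: v ∧ (∀ x ∈ u, x ∈ A.τ c.2.1) ∧ a ∉ A.τ c.2.1 ∧
    c'.2.1 ∈ A.δ c.2.1 a ∧ c'.1 = c.1 ++ u ∧ c'.2.2 = v

def Accepts (A : NrnrNFAwtl Q α) (w : List α) : Prop :=
  ∃ q₀ ∈ A.I, ∃ x q w', Relation.ReflTransGen A.Step ([], q₀, w) (x, q, w') ∧
    (∀ y ∈ w', y ∈ A.τ q) ∧ q ∈ A.F

def lang (A : NrnrNFAwtl Q α) : Set (List α) := { w | A.Accepts w }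

def Deterministic (A : NrnrNFAwtl Q α) : Prop :=
  (∃ q₀, A.I = {q₀}) ∧ ∀ q a, (A.δ q a).Subsingleton

end NrnrNFAwtl

/-- Language classes. -/
def NFAwtlLangs (α : Type) [Fintype α] : Set (Set (List α)) :=
  { L | ∃ (Q : Type) (_ : Fintype Q) (A : NFAwtl Q α), A.lang = L }

def DFAwtlLangs (α : Type) [Fintype α] : Set (Set (List α)) :=
  { L | ∃ (Q : Type) (_ : Fintype Q) (A : NFAwtl Q α), A.Deterministic ∧ A.lang = L }

def RNFAwtlLangs (α : Type) [Fintype α] : Set (Set (List α)) :=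
  { L | ∃ (Q : Type) (_ : Fintype Q) (A : RNFAwtl Q α), A.lang = L }

def RDFAwtlLangs (α : Type) [Fintype α] : Set (Set (List α)) :=
  { L | ∃ (Q : Type) (_ : Fintype Q) (A : RNFAwtl Q α), A.Deterministic ∧ A.lang = L }

def NrNFAwtlLangs (α : Type) [Fintype α] : Set (Set (List α)) :=
  { L | ∃ (Q : Type) (_ : Fintype Q) (A : NrNFAwtl Q α), A.lang = L }

def NrDFAwtlLangs (α : Type) [Fintype α] : Set (Set (List α)) :=
  { L | ∃ (Q : Type) (_ : Fintype Q) (A : NrNFAwtl Q α), A.Deterministic ∧ A.lang = L }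

def NrnrNFAwtlLangs (α : Type) [Fintype α] : Set (Set (List α)) :=
  { L | ∃ (Q : Type) (_ : Fintype Q) (A : NrnrNFAwtl Q α), A.lang = L }

def NrnrDFAwtlLangs (α : Type) [Fintype α] : Set (Set (List α)) :=
  { L | ∃ (Q : Type) (_ : Fintype Q) (A : NrnrNFAwtl Q α), A.Deterministic ∧ A.lang = L }

/-- The three-letter alphabet {a, b, c}. -/
inductive Al : Type
  | a | b | c
deriving DecidableEq

instance : Fintype Al := ⟨{Al.a, Al.b, Al.c}, fun x => by cases x <;> simp⟩

/-!
A computation of an RNFAwtl can only run forever by cycling through `◁`-transitions on a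
fixed tape, and such a cycle can always be cut out of an accepting computation. The
normalized machine therefore remembers the set `S` of states in which it has met the
marker since the last deletion and refuses a `◁`-transition from a state already in `S`;
instead of accepting, it enters a sink that deletes the rest of the tape. Every step then
shortens the tape or enlarges `S`, so all computations terminate, and the machine stays
deterministic since it only prunes transitions and makes the accepting move unique.
-/

namespace RNFAwtl

open Relation

variable {Q α : Type}

def AcceptsFrom (A : RNFAwtl Q α) (c : Q × List α) : Prop :=
  ∃ q w', ReflTransGen A.Step c (q, w') ∧ (∀ x ∈ w', x ∈ A.τ q) ∧ q ∈ A.Facc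

section Normalize

variable [DecidableEq Q] (A : RNFAwtl Q α)

def normalize : RNFAwtl ((Q × Finset Q) ⊕ Unit) α where
  τ
    | .inl (q, _) => A.τ q
    | .inr _ => ∅
  I := (fun q => .inl (q, ∅)) '' A.I
  δ
    | .inl (q, _), a => (fun q₁ => .inl (q₁, ∅)) '' A.δ q a
    | .inr _, _ => {.inr ()}
  δend
    | .inl (q, S) => {x | q ∉ S ∧ (q ∈ A.Facc ∧ x = .inr () ∨
        ∃ q₁ ∈ A.δend q, x = .inl (q₁, insert q S))}
    | .inr _ => ∅
  Facc := {.inr ()}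
  tr := by
    rintro (⟨q, S⟩ | _) a ha
    · simp [A.tr q a ha]
    · exact absurd ha (Set.notMem_empty a)
  accEnd := by
    rintro (⟨q, S⟩ | _) hq
    · cases hq
    · rfl

variable {A} in
theorem Deterministic.normalize (hA : A.Deterministic) :
    A.normalize.Deterministic := by
  obtain ⟨⟨q₀, hI⟩, hδ, hδend⟩ := hA
  refine ⟨⟨.inl (q₀, ∅), by simp [RNFAwtl.normalize, hI]⟩, ?_, ?_⟩
  · rintro (⟨q, S⟩ | ⟨⟩) a
    · exact (hδ q a).image _
    · exact Set.subsingleton_singleton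
  · rintro (⟨q, S⟩ | ⟨⟩)
    · rintro x ⟨-, hx⟩ y ⟨-, hy⟩
      rcases hx with ⟨hF, rfl⟩ | ⟨q₁, hq₁, rfl⟩ <;>
        rcases hy with ⟨hF', rfl⟩ | ⟨q₂, hq₂, rfl⟩
      · rfl
      · simp [A.accEnd q hF] at hq₂
      · simp [A.accEnd q hF'] at hq₁
      · rw [hδend q hq₁ hq₂]
    · exact Set.subsingleton_empty

theorem normalize_sink_clears (w : List α) :
    ReflTransGen A.normalize.Step (.inr (), w) (.inr (), []) := by
  induction w with
  | nil => exact .refl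
  | cons a w ih =>
    refine .head ?_ ih
    exact Or.inl ⟨[], a, w, rfl, by simp, Set.notMem_empty a, rfl, rfl⟩

theorem eq_nil_of_normalize_accepting {q : (Q × Finset Q) ⊕ Unit} {w : List α}
    (htr : ∀ x ∈ w, x ∈ A.normalize.τ q) (hq : q ∈ A.normalize.Facc) : w = [] := by
  cases hq
  exact List.eq_nil_iff_forall_not_mem.2 fun x hx => Set.notMem_empty x (htr x hx)

/-- A run of the normalized machine shadows a run of `A` until it enters the sink, which
happens only from an accepting configuration of `A`. -/
theorem normalize_reaches_back {p : Q} {S : Finset Q} {w : List α}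
    {c : ((Q × Finset Q) ⊕ Unit) × List α}
    (h : ReflTransGen A.normalize.Step (.inl (p, S), w) c) :
    c.1.elim (fun s => ReflTransGen A.Step (p, w) (s.1, c.2)) (fun _ => A.AcceptsFrom (p, w)) := by
  induction h with
  | refl => exact .refl
  | @tail b c _ hstep ih =>
    obtain ⟨(⟨q, T⟩ | ⟨⟩), w₂⟩ := b
    · rcases hstep with ⟨u, a, v, hw, hu, ha, ⟨q₁, hq₁, hc⟩, hw'⟩ | ⟨htr, ⟨-, hend⟩, hw'⟩
      · rw [← hc]
        exact ih.tail (Or.inl ⟨u, a, v, hw, hu, ha, hq₁, hw'⟩)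
      · rcases hend with ⟨hF, hc⟩ | ⟨q₁, hq₁, hc⟩
        · rw [hc]
          exact ⟨q, w₂, ih, htr, hF⟩
        · rw [hc, hw']
          exact ih.tail (Or.inr ⟨htr, hq₁, rfl⟩)
    · rcases hstep with ⟨_, _, _, _, _, _, hc, _⟩ | ⟨_, hend, _⟩
      · rw [Set.mem_singleton_iff.1 hc]
        exact ih
      · cases hend

def ReachesAvoiding (p : Q) (w : List α) (V : Finset Q) (w' : List α) : Prop :=
  ∀ s ∈ V, ∃ T ⊆ V, s ∉ T ∧
    ReflTransGen A.normalize.Step (.inl (p, ∅), w) (.inl (s, T), w')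

variable {A}

theorem ReachesAvoiding.singleton_of_delete {p r q : Q} {w : List α} {V : Finset Q}
    {w₂ w₃ : List α} (hV : A.ReachesAvoiding p w V w₂) (hr : r ∈ V)
    (hstep : ∃ u a v, w₂ = u ++ a :: v ∧ (∀ x ∈ u, x ∈ A.τ r) ∧ a ∉ A.τ r ∧
      q ∈ A.δ r a ∧ w₃ = u ++ v) :
    A.ReachesAvoiding p w {q} w₃ := by
  obtain ⟨u, a, v, hw, hu, ha, hq, hw₃⟩ := hstep
  obtain ⟨T, -, -, hrun⟩ := hV r hr
  intro s hs
  rw [Finset.mem_singleton.1 hs]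
  exact ⟨∅, Finset.empty_subset _, Finset.notMem_empty _,
    hrun.tail (Or.inl ⟨u, a, v, hw, hu, ha, ⟨q, hq, rfl⟩, hw₃⟩)⟩

/-- The run to `r` avoiding `r` may take the `◁`-step, and its new recorded set
`insert r T ⊆ V` avoids `q`. -/
theorem ReachesAvoiding.insert_of_marker {p r q : Q} {w w₂ : List α} {V : Finset Q}
    (hV : A.ReachesAvoiding p w V w₂) (hr : r ∈ V) (hqV : q ∉ V)
    (htr : ∀ x ∈ w₂, x ∈ A.τ r) (hq : q ∈ A.δend r) :
    A.ReachesAvoiding p w (insert q V) w₂ := by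
  intro s hs
  rcases Finset.mem_insert.1 hs with rfl | hs
  · obtain ⟨T, hTV, hrT, hrun⟩ := hV r hr
    refine ⟨insert r T, Finset.insert_subset (Finset.mem_insert_of_mem hr)
      (hTV.trans (Finset.subset_insert _ _)), ?_,
      hrun.tail (Or.inr ⟨htr, ⟨hrT, Or.inr ⟨s, hq, rfl⟩⟩, rfl⟩)⟩
    intro hmem
    rcases Finset.mem_insert.1 hmem with rfl | hsT
    exacts [hqV hr, hqV (hTV hsT)]
  · obtain ⟨T, hTV, hsT, hrun⟩ := hV s hs
    exact ⟨T, hTV.trans (Finset.subset_insert _ _), hsT, hrun⟩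

variable (A)

/-- The invariant: `V` collects the states in which `A` has met the marker since its
last deletion. -/
theorem exists_reachesAvoiding {p : Q} {w : List α} {c : Q × List α}
    (h : ReflTransGen A.Step (p, w) c) :
    ∃ V : Finset Q, c.1 ∈ V ∧ A.ReachesAvoiding p w V c.2 := by
  induction h with
  | refl =>
    refine ⟨{p}, Finset.mem_singleton_self p, fun s hs => ?_⟩
    rw [Finset.mem_singleton.1 hs]
    exact ⟨∅, Finset.empty_subset _, Finset.notMem_empty _, .refl⟩
  | @tail b c _ hstep ih =>
    obtain ⟨V, hrV, hV⟩ := ih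
    rcases hstep with hdel | ⟨htr, hq, hw'⟩
    · exact ⟨{c.1}, Finset.mem_singleton_self _, hV.singleton_of_delete hrV hdel⟩
    · rw [hw']
      by_cases hqV : c.1 ∈ V
      · exact ⟨V, hqV, hV⟩
      · exact ⟨insert c.1 V, Finset.mem_insert_self _ _, hV.insert_of_marker hrV hqV htr hq⟩

theorem lang_normalize : A.normalize.lang = A.lang := by
  ext w
  constructor
  · rintro ⟨_, ⟨q₀, hq₀, rfl⟩, q, w', hrun, -, rfl⟩
    exact ⟨q₀, hq₀, A.normalize_reaches_back hrun⟩
  · rintro ⟨q₀, hq₀, q, w', hrun, htr, hF⟩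
    obtain ⟨V, hqV, hV⟩ := A.exists_reachesAvoiding hrun
    obtain ⟨T, -, hqT, hrun'⟩ := hV q hqV
    refine ⟨.inl (q₀, ∅), ⟨q₀, hq₀, rfl⟩, .inr (), [],
      .trans (hrun'.tail ?_) (A.normalize_sink_clears w'), by simp, rfl⟩
    exact Or.inr ⟨htr, ⟨hqT, Or.inl ⟨hF, rfl⟩⟩, rfl⟩

section Termination

variable [Fintype Q]

/-- The tape length is weighted so that one deletion outweighs any growth of the recorded set. -/
def normalizeRank (c : ((Q × Finset Q) ⊕ Unit) × List α) : ℕ :=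
  c.2.length * (Fintype.card Q + 1) + c.1.elim (fun s => s.2ᶜ.card) fun _ => 0

theorem normalizeRank_lt_of_step {c c' : ((Q × Finset Q) ⊕ Unit) × List α}
    (h : A.normalize.Step c c') : normalizeRank c' < normalizeRank c := by
  have hbound : ∀ x : (Q × Finset Q) ⊕ Unit,
      x.elim (fun s => s.2ᶜ.card) (fun _ => 0) ≤ Fintype.card Q := by
    rintro (⟨q, S⟩ | ⟨⟩)
    exacts [Finset.card_le_univ _, Nat.zero_le _]
  obtain ⟨x, w⟩ := c
  obtain ⟨x', w'⟩ := c'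
  rcases h with ⟨u, a, v, hw, -, -, -, hw'⟩ | ⟨-, hend, hw'⟩
  · have := hbound x'
    simp only [normalizeRank] at hw hw' ⊢
    subst hw hw'
    simp only [List.length_append, List.length_cons]
    nlinarith
  · simp only [normalizeRank] at hw' ⊢
    subst hw'
    obtain ⟨q, S⟩ | ⟨⟩ := x
    · obtain ⟨hqS, hend⟩ := hend
      have hgap : 0 < Sᶜ.card := Finset.card_pos.2 ⟨q, Finset.mem_compl.2 hqS⟩
      rcases hend with ⟨-, rfl⟩ | ⟨q₁, -, rfl⟩
      · simpa using hgap
      · simp only [Sum.elim_inl, add_lt_add_iff_left]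
        exact Finset.card_lt_card (Finset.compl_ssubset_compl.2 (Finset.ssubset_insert hqS))
    · cases hend

theorem not_forall_normalize_step (f : ℕ → ((Q × Finset Q) ⊕ Unit) × List α) :
    ¬ ∀ n, A.normalize.Step (f n) (f (n + 1)) := fun hf =>
  not_strictAnti_of_wellFoundedLT (normalizeRank ∘ f)
    (strictAnti_nat_of_succ_lt fun n => A.normalizeRank_lt_of_step (hf n))

end Termination

end Normalize

end RNFAwtl

theorem RNFAwtl_normalization_general (α : Type) (Q : Type) [Fintype Q]
    (A : RNFAwtl Q α) :
    ∃ (Q' : Type) (_ : Fintype Q') (C : RNFAwtl Q' α),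
      C.lang = A.lang ∧
      (∀ f : ℕ → Q' × List α, ¬ ∀ n, C.Step (f n) (f (n + 1))) ∧
      (∀ (w : List α), ∀ q₀ ∈ C.I, ∀ (q : Q') (w' : List α),
        Relation.ReflTransGen C.Step (q₀, w) (q, w') →
        (∀ x ∈ w', x ∈ C.τ q) → q ∈ C.Facc → w' = []) ∧
      (A.Deterministic → C.Deterministic) := by
  classical
  exact ⟨_, inferInstance, A.normalize, A.lang_normalize, A.not_forall_normalize_step,
    fun _ _ _ _ _ _ htr hq => A.eq_nil_of_normalize_accepting htr hq,
    RNFAwtl.Deterministic.normalize⟩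

/-- every RNFAwtl can be converted into an equivalent RNFAwtl `C`
that admits no infinite computation and accepts only after reading and deleting
its input completely; determinism is preserved. -/
theorem RNFAwtl_normalization (α : Type) [Fintype α] (Q : Type) [Fintype Q]
    (A : RNFAwtl Q α) :
    ∃ (Q' : Type) (_ : Fintype Q') (C : RNFAwtl Q' α),
      C.lang = A.lang ∧
      (∀ f : ℕ → Q' × List α, ¬ ∀ n, C.Step (f n) (f (n + 1))) ∧
      (∀ (w : List α), ∀ q₀ ∈ C.I, ∀ (q : Q') (w' : List α),
        Relation.ReflTransGen C.Step (q₀, w) (q, w') →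
        (∀ x ∈ w', x ∈ C.τ q) → q ∈ C.Facc → w' = []) ∧
      (A.Deterministic → C.Deterministic) :=
  RNFAwtl_normalization_general α Q A
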